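/- Let m ∈ ℂ with m ≠ 0. Then the supremum sup { |z₁ − z₂| : z₁, z₂ ∈ ℂ, ‖[D, π(z₁,z₂)]‖ ≤ 1 } equals 1/|m|. That is, the Connes distance between the two points (characters) x(z₁,z₂) = z₁ and y(z₁,z₂) = z₂ of the two-point spectral geometry equals 1/|m|. -/

import Mathlib

/-! Since `π(z₁, z₂) = z₂ • 1 + (z₁ - z₂) • π(1, 0)` and scalars commute with `D`, the commutator
`[D, π(z₁, z₂)]` is `(z₁ - z₂) • [D, π(1, 0)]`. The latter has Gram matrix `|m|² • diag(1, 0, 1)`,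
so its norm is `|m|`, and the constraint `‖[D, π(z₁, z₂)]‖ ≤ 1` reads `|m| |z₁ - z₂| ≤ 1`. -/

open Matrix
open scoped Matrix.Norms.L2Operator

/-- The Dirac operator of the two-point finite spectral triple. -/
noncomputable def Dir (m : ℂ) : Matrix (Fin 3) (Fin 3) ℂ :=
  !![0, m, starRingEnd ℂ m; starRingEnd ℂ m, 0, 0; m, 0, 0]

/-- The representation of the algebra `ℂ ⊕ ℂ` on `ℂ³`. -/
noncomputable def π' (z₁ z₂ : ℂ) : Matrix (Fin 3) (Fin 3) ℂ :=
  Matrix.diagonal ![z₁, z₁, z₂]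

lemma π'_eq_smul_one_add_smul (z₁ z₂ : ℂ) : π' z₁ z₂ = z₂ • 1 + (z₁ - z₂) • π' 1 0 := by
  ext i j
  fin_cases i <;> fin_cases j <;> simp [π']

lemma commutator_Dir_π' (m z₁ z₂ : ℂ) :
    Dir m * π' z₁ z₂ - π' z₁ z₂ * Dir m = (z₁ - z₂) • (Dir m * π' 1 0 - π' 1 0 * Dir m) := by
  rw [π'_eq_smul_one_add_smul]
  simp only [mul_add, add_mul, mul_smul_comm, smul_mul_assoc, mul_one, one_mul, smul_sub]
  abel

lemma commutator_Dir_π'_one_zero (m : ℂ) :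
    Dir m * π' 1 0 - π' 1 0 * Dir m = !![0, 0, -starRingEnd ℂ m; 0, 0, 0; m, 0, 0] := by
  ext i j
  fin_cases i <;> fin_cases j <;>
    simp [Dir, π', Matrix.mul_apply, Matrix.vecMul, dotProduct, Fin.sum_univ_three]

lemma norm_commutator_Dir_π'_one_zero (m : ℂ) : ‖Dir m * π' 1 0 - π' 1 0 * Dir m‖ = ‖m‖ := by
  rw [commutator_Dir_π'_one_zero]
  set A : Matrix (Fin 3) (Fin 3) ℂ := !![0, 0, -starRingEnd ℂ m; 0, 0, 0; m, 0, 0]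
  set v : Fin 3 → ℂ := ![((‖m‖ ^ 2 : ℝ) : ℂ), 0, ((‖m‖ ^ 2 : ℝ) : ℂ)]
  have hA : Aᴴ * A = diagonal v := by
    ext i j
    fin_cases i <;> fin_cases j <;>
      simp [A, v, Matrix.mul_apply, Fin.sum_univ_three, Complex.conj_mul']
  have hv : ‖v‖ = ‖m‖ ^ 2 := by
    refine le_antisymm ((pi_norm_le_iff_of_nonneg (by positivity)).2 fun i => ?_) ?_
    · fin_cases i <;> simp [v]
    · simpa [v] using norm_le_pi_norm v 0
  have h := l2_opNorm_conjTranspose_mul_self A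
  rw [hA, l2_opNorm_diagonal, hv, ← sq] at h
  exact ((pow_left_inj₀ (norm_nonneg _) (norm_nonneg _) two_ne_zero).1 h).symm

lemma norm_commutator_Dir_π' (m z₁ z₂ : ℂ) :
    ‖Dir m * π' z₁ z₂ - π' z₁ z₂ * Dir m‖ = ‖m‖ * ‖z₁ - z₂‖ := by
  rw [commutator_Dir_π', norm_smul, norm_commutator_Dir_π'_one_zero, mul_comm]

/-- **Connes distance of the two-point spectral geometry**: for `m ≠ 0`,
`sup { |z₁ − z₂| : ‖[D, π(z₁,z₂)]‖ ≤ 1 } = 1/|m|`. -/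
theorem connes_distance_two_point (m : ℂ) (hm : m ≠ 0) :
    sSup {d : ℝ | ∃ z₁ z₂ : ℂ,
        ‖Dir m * π' z₁ z₂ - π' z₁ z₂ * Dir m‖ ≤ 1 ∧ d = ‖z₁ - z₂‖}
      = 1 / ‖m‖ := by
  have hm' : 0 < ‖m‖ := norm_pos_iff.mpr hm
  simp_rw [norm_commutator_Dir_π']
  refine IsGreatest.csSup_eq ⟨⟨(‖m‖⁻¹ : ℂ), 0, ?_, ?_⟩, ?_⟩
  · simp [hm'.ne']
  · simp
  · rintro d ⟨z₁, z₂, h, rfl⟩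
    exact (le_div_iff₀' hm').mpr h
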